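/- arXiv:2301.10704 — 2 statements merged into one kernel-verified Lean document; each statement's English description precedes it below -/
import Mathlib

section
/- Let x̃ be a MAPF deviation for robot a on (s,f) from a MAPF plan x. Then the co-observation self-reports of all honest robots coincide under x̃ and x — that is, β_{x̃}(t)^i = β_x(t)^i for every robot i ≠ a and every time t — if and only if for every robot i ≠ a and every time t: if (x_t^i, x̃_t^a) ∈ E* or (x_t^i, x_t^a) ∈ E*, then x̃_t^a = x_t^a. (In other words, a deviation evades co-observation-based detection exactly when the deviating robot never causes an unexpected observation and never misses an expected observation.) -/
/-- A MAPF plan of length `T` on the graph with edge relation `E`: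
robots move along edges, never share a vertex, and never swap along an edge. -/
def IsMAPFPlan {V R : Type*} (E : V → V → Prop) (T : ℕ) (x : ℕ → R → V) : Prop :=
  (∀ t < T, ∀ i : R, E (x t i) (x (t + 1) i)) ∧
  (∀ t ≤ T, ∀ i j : R, i ≠ j → x t i ≠ x t j) ∧
  (∀ t < T, ∀ i j : R, i ≠ j → ¬ (x (t + 1) i = x t j ∧ x (t + 1) j = x t i))

/-- `xd` is a MAPF deviation for robot `a` on `(s, f)` from the plan `x`. -/
def IsDeviation {V R : Type*} (E : V → V → Prop) (T : ℕ) (x xd : ℕ → R → V)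
    (a : R) (s f : ℕ) : Prop :=
  IsMAPFPlan E T xd ∧ ∀ (j : R) (t : ℕ), x t j ≠ xd t j ↔ (j = a ∧ s < t ∧ t < f)

/-- The deviation visits a forbidden vertex strictly inside the window `(s, f)`. -/
def IsForbidden {V R : Type*} (Vforb : ℕ → Set V) (xd : ℕ → R → V) (a : R) (s f : ℕ) : Prop :=
  ∃ t, s < t ∧ t < f ∧ xd t a ∈ Vforb t

/-- The co-observation self-report of robot `i` at time `t` under the plan `y`. -/
def report {V R : Type*} (Estar : V → V → Prop) (y : ℕ → R → V) (t : ℕ) (i : R) :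
    V × Set (R × V) :=
  (y (t + 1) i, {p : R × V | p.1 ≠ i ∧ Estar (y t i) (y t p.1) ∧ p.2 = y t p.1})

/-- `y` is a MAPF continuation of the prefix with per-robot lengths `L` and values `A`. -/
def IsContinuation {V R : Type*} (E : V → V → Prop) (L : R → ℕ) (A : R → ℕ → V)
    (y : ℕ → R → V) : Prop :=
  (∃ T, (∀ i, L i ≤ T) ∧ IsMAPFPlan E T y) ∧ ∀ (i : R) (t : ℕ), t ≤ L i → y t i = A i t

/-- a MAPF deviation for robot `a` leaves all honest co-observation
self-reports unchanged iff the deviating robot never causes an unexpected observation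
and never misses an expected observation. -/
theorem coobservation_evasion_iff {V R : Type*}
    (E Estar : V → V → Prop) (hErefl : ∀ v, E v v)
    (T : ℕ) (x xd : ℕ → R → V) (a : R) (s f : ℕ)
    (hx : IsMAPFPlan E T x)
    (hdev : IsDeviation E T x xd a s f) :
    (∀ i : R, i ≠ a → ∀ t : ℕ, report Estar xd t i = report Estar x t i) ↔
    (∀ i : R, i ≠ a → ∀ t : ℕ,
      (Estar (x t i) (xd t a) ∨ Estar (x t i) (x t a)) → xd t a = x t a) := by
  have heq : ∀ (j : R), j ≠ a → ∀ t, x t j = xd t j := by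
    intro j hj t
    by_contra h
    exact hj ((hdev.2 j t).mp h).1
  constructor
  · intro h i hi t hE
    have hr := h i hi t
    unfold report at hr
    have hset := congrArg Prod.snd hr
    simp only at hset
    rcases hE with hE | hE
    · have hmem : ((a, xd t a) : R × V) ∈
          {p : R × V | p.1 ≠ i ∧ Estar (xd t i) (xd t p.1) ∧ p.2 = xd t p.1} := by
        refine ⟨fun hc => hi hc.symm, ?_, rfl⟩
        rw [← heq i hi t]; exact hE
      rw [hset] at hmem
      exact hmem.2.2
    · have hmem : ((a, x t a) : R × V) ∈
          {p : R × V | p.1 ≠ i ∧ Estar (x t i) (x t p.1) ∧ p.2 = x t p.1} := by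
        exact ⟨fun hc => hi hc.symm, hE, rfl⟩
      rw [← hset] at hmem
      exact hmem.2.2.symm
  · intro h i hi t
    unfold report
    have hi' := heq i hi
    refine Prod.ext (hi' (t+1)).symm ?_
    ext p
    simp only [Set.mem_setOf_eq, hi' t]
    constructor
    · rintro ⟨h1, h2, h3⟩
      by_cases hp : p.1 = a
      · subst hp
        rw [← hi' t] at h2
        have := h i hi t (Or.inl h2)
        rw [hi' t] at h2
        rw [this] at h2 h3
        exact ⟨h1, h2, h3⟩
      · rw [← heq p.1 hp t] at h2 h3
        exact ⟨h1, h2, h3⟩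
    · rintro ⟨h1, h2, h3⟩
      by_cases hp : p.1 = a
      · subst hp
        rw [← hi' t] at h2
        have := h i hi t (Or.inr h2)
        rw [hi' t] at h2
        rw [← this] at h2 h3
        exact ⟨h1, h2, h3⟩
      · rw [heq p.1 hp t] at h2 h3
        exact ⟨h1, h2, h3⟩
end

section
/- (Full-information attack planning is graph reachability.) Let x be a MAPF plan of length T, a ∈ R, and t < f ≤ T. There exists a forbidden MAPF deviation x̃ for a on (t,f) from x whose co-observation reports match the nominal ones (β_{x̃}(u)^i = β_x(u)^i for all robots i ≠ a and all times u) if and only if there exists a sequence of vertices w_t, w_{t+1}, …, w_f with: w_t = x_t^a, w_f = x_f^a, (w_u, w_{u+1}) ∈ E for all t ≤ u < f; w_u ≠ x_u^a for all u with t < u < f; for all u with t < u < f and all robots j ≠ a, w_u ≠ x_u^j and there is no edge swap with x^j (not both w_{u+1} = x_u^j and x_{u+1}^j = w_u, for t ≤ u < f); for all robots i ≠ a and all u with t < u < f, (x_u^i, w_u) ∉ E* and (x_u^i, x_u^a) ∉ E*; and w_u ∈ V_forbidden(u) for some u with t < u < f. -/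
/-- full-information attack planning is graph reachability:
there is a forbidden MAPF deviation for `a` on `(t, f)` whose co-observation
reports match the nominal ones iff there is a suitable walk from `x t a`
back to `x f a` through a forbidden vertex, conflict-free and unobserved. -/
theorem attack_exists_iff_reachability {V R : Type*}
    (E Estar : V → V → Prop) (hErefl : ∀ v, E v v)
    (Vforb : ℕ → Set V)
    (T : ℕ) (x : ℕ → R → V) (hx : IsMAPFPlan E T x)
    (a : R) (t f : ℕ) (htf : t < f) (hfT : f ≤ T) :
    (∃ xd : ℕ → R → V, IsDeviation E T x xd a t f ∧ IsForbidden Vforb xd a t f ∧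
      ∀ i : R, i ≠ a → ∀ u : ℕ, report Estar xd u i = report Estar x u i) ↔
    (∃ w : ℕ → V,
      w t = x t a ∧ w f = x f a ∧
      (∀ u : ℕ, t ≤ u → u < f → E (w u) (w (u + 1))) ∧
      (∀ u : ℕ, t < u → u < f → w u ≠ x u a) ∧
      (∀ u : ℕ, t < u → u < f → ∀ j : R, j ≠ a → w u ≠ x u j) ∧
      (∀ u : ℕ, t ≤ u → u < f → ∀ j : R, j ≠ a →
        ¬ (w (u + 1) = x u j ∧ x (u + 1) j = w u)) ∧
      (∀ i : R, i ≠ a → ∀ u : ℕ, t < u → u < f →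
        ¬ Estar (x u i) (w u) ∧ ¬ Estar (x u i) (x u a)) ∧
      (∃ u : ℕ, t < u ∧ u < f ∧ w u ∈ Vforb u)) := by
  classical
  obtain ⟨hxE, hxV, hxS⟩ := hx
  constructor
  · rintro ⟨xd, ⟨⟨hdE, hdV, hdS⟩, hdev⟩, ⟨u0, hu01, hu02, hu0f⟩, hrep⟩
    have hxdeq : ∀ j u, ¬(j = a ∧ t < u ∧ u < f) → xd u j = x u j := by
      intro j u h
      by_contra hne
      exact h ((hdev j u).mp (fun e => hne e.symm))
    have hne : ∀ u, t < u → u < f → xd u a ≠ x u a := by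
      intro u h1 h2
      intro e
      have := (hdev a u).mpr ⟨rfl, h1, h2⟩
      exact this e.symm
    refine ⟨fun u => xd u a, ?_, ?_, ?_, ?_, ?_, ?_, ?_, ⟨u0, hu01, hu02, hu0f⟩⟩
    · exact (hxdeq a t (by simp)).symm ▸ rfl
    · exact hxdeq a f (by simp)
    · intro u h1 h2
      exact hdE u (lt_of_lt_of_le h2 hfT) a
    · intro u h1 h2
      exact fun e => hne u h1 h2 e
    · intro u h1 h2 j hj
      have h3 : xd u j = x u j := hxdeq j u (by simp [hj])
      have := hdV u (le_of_lt (lt_of_lt_of_le h2 hfT)) a j (Ne.symm hj)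
      rw [h3] at this
      exact this
    · intro u h1 h2 j hj
      have h3 : xd u j = x u j := hxdeq j u (by simp [hj])
      have h4 : xd (u + 1) j = x (u + 1) j := hxdeq j (u + 1) (by simp [hj])
      have := hdS u (lt_of_lt_of_le h2 hfT) a j (Ne.symm hj)
      rw [h3, h4] at this
      exact this
    · intro i hi u h1 h2
      have hi' : xd u i = x u i := hxdeq i u (by simp [hi])
      have h2set := congrArg Prod.snd (hrep i hi u)
      simp only [report] at h2set
      constructor
      · intro hE
        have hmem : (a, xd u a) ∈ {p : R × V | p.1 ≠ i ∧ Estar (xd u i) (xd u p.1) ∧ p.2 = xd u p.1} := by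
          refine ⟨Ne.symm hi, ?_, rfl⟩
          rw [hi']; exact hE
        rw [h2set] at hmem
        obtain ⟨-, -, h5⟩ := hmem
        exact hne u h1 h2 h5
      · intro hE
        have hmem : (a, x u a) ∈ {p : R × V | p.1 ≠ i ∧ Estar (x u i) (x u p.1) ∧ p.2 = x u p.1} :=
          ⟨Ne.symm hi, hE, rfl⟩
        rw [← h2set] at hmem
        obtain ⟨-, -, h5⟩ := hmem
        exact hne u h1 h2 h5.symm
  · rintro ⟨w, hwt, hwf, hwE, hwa, hwj, hwS, hwO, ⟨u0, hu01, hu02, hu0f⟩⟩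
    set xd : ℕ → R → V := fun u i => if i = a ∧ t < u ∧ u < f then w u else x u i with hxd
    have hxdne : ∀ u (i : R), i ≠ a → xd u i = x u i := by
      intro u i hi; simp [hxd, hi]
    have hxda : ∀ u, t ≤ u → u ≤ f → xd u a = w u := by
      intro u h1 h2
      rcases eq_or_lt_of_le h1 with h1 | h1
      · simp [hxd, ← h1, hwt]
      rcases eq_or_lt_of_le h2 with h2 | h2
      · simp [hxd, h2, hwf]
      · simp [hxd, h1, h2]
    have hxda' : ∀ u, ¬(t < u ∧ u < f) → xd u a = x u a := by
      intro u h; simp [hxd, h]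
    have hxdall : ∀ u (i : R), ¬(i = a ∧ t < u ∧ u < f) → xd u i = x u i := by
      intro u i h
      by_cases hi : i = a
      · subst hi; exact hxda' u (fun hc => h ⟨rfl, hc⟩)
      · exact hxdne u i hi
    -- conflict-freeness at a single time
    have hV : ∀ u ≤ T, ∀ i j : R, i ≠ j → xd u i ≠ xd u j := by
      intro u hu i j hij
      by_cases hi : i = a ∧ t < u ∧ u < f
      · obtain ⟨hi, h1, h2⟩ := hi
        subst hi
        rw [hxda u (le_of_lt h1) (le_of_lt h2), hxdne u j (Ne.symm hij)]
        exact hwj u h1 h2 j (Ne.symm hij)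
      · rw [hxdall u i hi]
        by_cases hj : j = a ∧ t < u ∧ u < f
        · obtain ⟨hj, h1, h2⟩ := hj
          subst hj
          rw [hxda u (le_of_lt h1) (le_of_lt h2)]
          exact Ne.symm (hwj u h1 h2 i hij)
        · rw [hxdall u j hj]
          exact hxV u hu i j hij
    have hplan : IsMAPFPlan E T xd := by
      refine ⟨?_, hV, ?_⟩
      · -- edges
        intro u hu i
        by_cases hi : i = a
        · rw [hi]
          by_cases hwin : t ≤ u ∧ u < f
          · obtain ⟨h1, h2⟩ := hwin
            rw [hxda u h1 (le_of_lt h2), hxda (u + 1) (le_of_lt (Nat.lt_succ_of_le h1)) h2]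
            exact hwE u h1 h2
          · push_neg at hwin
            have hcase : u < t ∨ f ≤ u := by
              by_cases h1 : t ≤ u
              · exact Or.inr (hwin h1)
              · exact Or.inl (lt_of_not_ge h1)
            have e1 : xd u a = x u a := by
              apply hxda'
              rintro ⟨c1, c2⟩
              rcases hcase with h | h
              · exact absurd c1 (by omega)
              · exact absurd c2 (by omega)
            have e2 : xd (u + 1) a = x (u + 1) a := by
              apply hxda'
              rintro ⟨c1, c2⟩
              rcases hcase with h | h
              · omega
              · omega
            rw [e1, e2]; exact hxE u hu a
        · rw [hxdne u i hi, hxdne (u + 1) i hi]; exact hxE u hu i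
      · -- swaps
        intro u hu i j hij
        by_cases hwin : t ≤ u ∧ u < f
        · obtain ⟨h1, h2⟩ := hwin
          have ea1 : xd u a = w u := hxda u h1 (le_of_lt h2)
          have ea2 : xd (u + 1) a = w (u + 1) := hxda (u + 1) (by omega) (by omega)
          by_cases hi : i = a
          · subst hi
            have hj' := Ne.symm hij
            rw [ea1, ea2, hxdne u j hj', hxdne (u + 1) j hj']
            exact hwS u h1 h2 j hj'
          · by_cases hj : j = a
            · subst hj
              rw [ea1, ea2, hxdne u i hi, hxdne (u + 1) i hi]
              rintro ⟨c1, c2⟩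
              exact hwS u h1 h2 i hi ⟨c2, c1⟩
            · rw [hxdne u i hi, hxdne (u + 1) i hi, hxdne u j hj, hxdne (u + 1) j hj]
              exact hxS u hu i j hij
        · push_neg at hwin
          have hcase : u < t ∨ f ≤ u := by
            by_cases h1 : t ≤ u
            · exact Or.inr (hwin h1)
            · exact Or.inl (lt_of_not_ge h1)
          have e1 : ∀ k : R, xd u k = x u k := by
            intro k; apply hxdall; rintro ⟨-, c2, c3⟩; omega
          have e2 : ∀ k : R, xd (u + 1) k = x (u + 1) k := by
            intro k; apply hxdall; rintro ⟨-, c2, c3⟩; omega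
          rw [e1, e2, e1, e2]
          exact hxS u hu i j hij
    refine ⟨xd, ⟨hplan, ?_⟩, ⟨u0, hu01, hu02, ?_⟩, ?_⟩
    · intro j u
      constructor
      · intro hne
        by_contra h
        exact hne (hxdall u j h).symm
      · rintro ⟨hj, h1, h2⟩
        subst hj
        rw [hxda u (le_of_lt h1) (le_of_lt h2)]
        exact Ne.symm (hwa u h1 h2)
    · rw [hxda u0 (le_of_lt hu01) (le_of_lt hu02)]; exact hu0f
    · intro i hi u
      simp only [report, Prod.mk.injEq]
      refine ⟨hxdne (u + 1) i hi, ?_⟩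
      ext ⟨j, v⟩
      simp only [Set.mem_setOf_eq, hxdne u i hi]
      by_cases hj : j = a ∧ t < u ∧ u < f
      · obtain ⟨hj, h1, h2⟩ := hj
        subst hj
        rw [hxda u (le_of_lt h1) (le_of_lt h2)]
        have := hwO i hi u h1 h2
        constructor
        · rintro ⟨-, c2, -⟩; exact absurd c2 this.1
        · rintro ⟨-, c2, -⟩; exact absurd c2 this.2
      · rw [hxdall u j hj]
end
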